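/- Fix an integer C ≥ 2 and positive integers n_1 ≤ n_2 ≤ ... ≤ n_C with n = Σ_i n_i. Over all C-class confusion matrices with row sums n_1, ..., n_C, the AUROC-OVA index ρ_a attains its minimum value (1/(2C))·(C−1 − n_C/(n−n_{C−1})) at the confusion matrix in which, for every class i < C, all n_i points of class i are predicted as class C, and all n_C points of class C are predicted as class C−1; and ρ_a attains its maximum value 1 at the diagonal confusion matrix with m_ii = n_i for all i. -/
import Mathlib


open Finset

/-- The AUROC-OVA index `ρ_a` of a `C`-class confusion matrix `m`, where
`n_i` is the `i`-th row sum, `k_i` the `i`-th column sum and `n` the total. -/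
noncomputable def rhoOVA (C : ℕ) (m : Fin C → Fin C → ℕ) : ℝ :=
  (1 / (2 * (C : ℝ))) *
    ∑ i, (1 + (m i i : ℝ) / (∑ j, (m i j : ℝ))
      - ((∑ j, (m j i : ℝ)) - (m i i : ℝ)) /
          ((∑ a, ∑ b, (m a b : ℝ)) - ∑ j, (m i j : ℝ)))

lemma rhoOVA_aux_sum_sub_pos {C : ℕ} (hC : 2 ≤ C) (n : Fin C → ℕ) (hn : ∀ i, 0 < n i)
    (i : Fin C) : 0 < (∑ j, (n j : ℝ)) - (n i : ℝ) := by
  have h : (n i : ℝ) + ∑ j ∈ univ.erase i, (n j : ℝ) = ∑ j, (n j : ℝ) :=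
    Finset.add_sum_erase univ (fun j => (n j : ℝ)) (mem_univ i)
  have hpos : 0 < ∑ j ∈ univ.erase i, (n j : ℝ) := by
    apply Finset.sum_pos
    · intro j _; exact_mod_cast hn j
    · rw [← Finset.card_pos, Finset.card_erase_of_mem (mem_univ i), Finset.card_univ,
        Fintype.card_fin]
      omega
  linarith

lemma rhoOVA_aux_eq {C : ℕ} (n : Fin C → ℕ) (m : Fin C → Fin C → ℕ)
    (hrow : ∀ i, ∑ j, m i j = n i) :
    rhoOVA C m = (1 / (2 * (C : ℝ))) *
      ∑ i, (1 + (m i i : ℝ) / (n i : ℝ)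
        - ((∑ j, (m j i : ℝ)) - (m i i : ℝ)) / ((∑ j, (n j : ℝ)) - (n i : ℝ))) := by
  have h1 : ∀ i, (∑ j, (m i j : ℝ)) = (n i : ℝ) := by
    intro i; exact_mod_cast hrow i
  unfold rhoOVA
  simp only [h1]

lemma rhoOVA_aux_le_one {C : ℕ} (hC : 2 ≤ C) (n : Fin C → ℕ) (hn : ∀ i, 0 < n i)
    (m : Fin C → Fin C → ℕ) (hrow : ∀ i, ∑ j, m i j = n i) :
    rhoOVA C m ≤ 1 := by
  have hC0 : (0:ℝ) < (C:ℝ) := by exact_mod_cast (by omega : 0 < C)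
  rw [rhoOVA_aux_eq n m hrow]
  have hsum : ∑ i, (1 + (m i i : ℝ) / (n i : ℝ)
        - ((∑ j, (m j i : ℝ)) - (m i i : ℝ)) / ((∑ j, (n j : ℝ)) - (n i : ℝ)))
      ≤ ∑ _i : Fin C, (2:ℝ) := by
    apply Finset.sum_le_sum
    intro i _
    have hni : (0:ℝ) < (n i : ℝ) := by exact_mod_cast hn i
    have hd : (m i i:ℝ) / (n i:ℝ) ≤ 1 := by
      apply div_le_one_of_le₀
      · have : m i i ≤ n i := hrow i ▸ Finset.single_le_sum (fun j _ => Nat.zero_le _) (mem_univ i)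
        exact_mod_cast this
      · positivity
    have he : 0 ≤ ((∑ j, (m j i:ℝ)) - (m i i:ℝ)) / ((∑ j, (n j:ℝ)) - (n i:ℝ)) := by
      apply div_nonneg
      · have : (m i i:ℝ) ≤ ∑ j, (m j i:ℝ) :=
          Finset.single_le_sum (f := fun j => (m j i : ℝ)) (fun j _ => by positivity) (mem_univ i)
        linarith
      · linarith [rhoOVA_aux_sum_sub_pos hC n hn i]
    linarith
  have h2 : ∑ _i : Fin C, (2:ℝ) = 2 * (C:ℝ) := by
    rw [Finset.sum_const, Finset.card_univ, Fintype.card_fin]; ring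
  rw [h2] at hsum
  calc (1 / (2 * (C:ℝ))) * ∑ i, (1 + (m i i : ℝ) / (n i : ℝ)
        - ((∑ j, (m j i : ℝ)) - (m i i : ℝ)) / ((∑ j, (n j : ℝ)) - (n i : ℝ)))
      ≤ (1 / (2 * (C:ℝ))) * (2 * (C:ℝ)) := by
        apply mul_le_mul_of_nonneg_left hsum (by positivity)
    _ = 1 := by field_simp

lemma rhoOVA_aux_lower {C : ℕ} (hC : 2 ≤ C) (n : Fin C → ℕ) (hn : ∀ i, 0 < n i)
    (hmono : Monotone n) (L P : Fin C) (hL : (L : ℕ) = C - 1) (hP : (P : ℕ) = C - 2)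
    (m : Fin C → Fin C → ℕ) (hrow : ∀ i, ∑ j, m i j = n i) :
    (1 / (2 * (C : ℝ))) * ((C : ℝ) - 1 - (n L : ℝ) / ((∑ i, (n i : ℝ)) - (n P : ℝ)))
      ≤ rhoOVA C m := by
  have hTi : ∀ i : Fin C, 0 < (∑ j, (n j : ℝ)) - (n i : ℝ) :=
    rhoOVA_aux_sum_sub_pos hC n hn
  rw [rhoOVA_aux_eq n m hrow]
  set T := ∑ i, (n i : ℝ) with hT
  apply mul_le_mul_of_nonneg_left _ (by positivity : (0:ℝ) ≤ 1 / (2 * (C : ℝ)))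
  set c : Fin C → ℝ := fun j => if j = L then 1 / (T - (n P : ℝ)) else 1 / (T - (n L : ℝ))
    with hc
  have hcpos : ∀ j, 0 ≤ c j := by
    intro j
    rw [hc]
    dsimp only
    split
    · exact le_of_lt (one_div_pos.mpr (hTi P))
    · exact le_of_lt (one_div_pos.mpr (hTi L))
  have key : ∑ i, ((∑ j, (m j i : ℝ)) - (m i i : ℝ)) / (T - (n i : ℝ))
      ≤ 1 + (n L : ℝ) / (T - (n P : ℝ)) := by
    have step1 : ∀ i : Fin C, ((∑ j, (m j i : ℝ)) - (m i i : ℝ)) / (T - (n i : ℝ))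
        = ∑ j ∈ univ.erase i, (m j i : ℝ) * (1 / (T - (n i : ℝ))) := by
      intro i
      rw [← Finset.sum_mul, Finset.sum_erase_eq_sub (mem_univ i), mul_one_div]
    calc ∑ i, ((∑ j, (m j i : ℝ)) - (m i i : ℝ)) / (T - (n i : ℝ))
        = ∑ i, ∑ j ∈ univ.erase i, (m j i : ℝ) * (1 / (T - (n i : ℝ))) :=
          Finset.sum_congr rfl fun i _ => step1 i
      _ ≤ ∑ i, ∑ j ∈ univ.erase i, (m j i : ℝ) * c j := by
          apply Finset.sum_le_sum
          intro i _
          apply Finset.sum_le_sum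
          intro j hj
          have hji : j ≠ i := Finset.ne_of_mem_erase hj
          apply mul_le_mul_of_nonneg_left _ (by positivity : (0:ℝ) ≤ (m j i : ℝ))
          rw [hc]
          dsimp only
          split
          · rename_i hjL
            have hiP : i ≤ P := by
              rw [Fin.le_def]
              have : (i : ℕ) ≠ (L : ℕ) := fun h => hji (hjL.trans (Fin.ext h.symm))
              have hi := i.isLt
              omega
            have hnP : (n i : ℝ) ≤ (n P : ℝ) := by exact_mod_cast hmono hiP
            exact one_div_le_one_div_of_le (hTi P) (by linarith)
          · have hiL : i ≤ L := by
              rw [Fin.le_def]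
              have hi := i.isLt
              omega
            have hnL : (n i : ℝ) ≤ (n L : ℝ) := by exact_mod_cast hmono hiL
            exact one_div_le_one_div_of_le (hTi L) (by linarith)
      _ ≤ ∑ i, ∑ j, (m j i : ℝ) * c j := by
          apply Finset.sum_le_sum
          intro i _
          apply Finset.sum_le_sum_of_subset_of_nonneg (Finset.subset_univ _)
          intro j _ _
          exact mul_nonneg (by positivity) (hcpos j)
      _ = ∑ j, (∑ i, (m j i : ℝ)) * c j := by
          rw [Finset.sum_comm]
          exact Finset.sum_congr rfl fun j _ => (Finset.sum_mul _ _ _).symm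
      _ = ∑ j, (n j : ℝ) * c j := by
          apply Finset.sum_congr rfl
          intro j _
          congr 1
          exact_mod_cast hrow j
      _ = 1 + (n L : ℝ) / (T - (n P : ℝ)) := by
          rw [← Finset.add_sum_erase univ (fun j => (n j : ℝ) * c j) (mem_univ L)]
          have h1 : (n L : ℝ) * c L = (n L : ℝ) / (T - (n P : ℝ)) := by
            rw [hc]; dsimp only; rw [if_pos rfl, mul_one_div]
          have h2 : ∑ j ∈ univ.erase L, (n j : ℝ) * c j = 1 := by
            rw [Finset.sum_congr rfl (fun j hj => by
              rw [hc]; dsimp only; rw [if_neg (Finset.ne_of_mem_erase hj), mul_one_div] :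
              ∀ j ∈ univ.erase L, (n j : ℝ) * c j = (n j : ℝ) / (T - (n L : ℝ)))]
            rw [← Finset.sum_div, Finset.sum_erase_eq_sub (mem_univ L),
              div_self (ne_of_gt (hTi L))]
          rw [h1, h2]
          ring
  have hA : (0:ℝ) ≤ ∑ i, (m i i : ℝ) / (n i : ℝ) := by
    apply Finset.sum_nonneg
    intro i _
    have := hn i
    positivity
  have hsplit : ∑ i, (1 + (m i i : ℝ) / (n i : ℝ)
        - ((∑ j, (m j i : ℝ)) - (m i i : ℝ)) / (T - (n i : ℝ)))
      = (C : ℝ) + ∑ i, (m i i : ℝ) / (n i : ℝ)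
        - ∑ i, ((∑ j, (m j i : ℝ)) - (m i i : ℝ)) / (T - (n i : ℝ)) := by
    rw [Finset.sum_sub_distrib, Finset.sum_add_distrib, Finset.sum_const, Finset.card_univ,
      Fintype.card_fin, nsmul_eq_mul, mul_one]
  rw [hsplit]
  linarith

lemma rhoOVA_aux_minmat {C : ℕ} (hC : 2 ≤ C) (n : Fin C → ℕ) (hn : ∀ i, 0 < n i)
    (L P : Fin C) (hL : (L : ℕ) = C - 1) (hP : (P : ℕ) = C - 2) :
    rhoOVA C (fun i j => if i = L then (if j = P then n i else 0)
        else (if j = L then n i else 0))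
      = (1 / (2 * (C : ℝ))) * ((C : ℝ) - 1 - (n L : ℝ) / ((∑ i, (n i : ℝ)) - (n P : ℝ))) := by
  have hLP : L ≠ P := by
    intro h
    have := congrArg (Fin.val) h
    omega
  have hrow : ∀ i : Fin C, ∑ j : Fin C, (if i = L then (if j = P then n i else 0)
      else (if j = L then n i else 0)) = n i := by
    intro i
    by_cases h : i = L <;> simp [h, Finset.sum_ite_eq']
  rw [rhoOVA_aux_eq n _ hrow]
  set T := ∑ i, (n i : ℝ) with hT
  have hTL : (0:ℝ) < T - (n L : ℝ) := rhoOVA_aux_sum_sub_pos hC n hn L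
  congr 1
  have hdiag : ∀ i : Fin C,
      ((if i = L then (if i = P then n i else 0) else (if i = L then n i else 0)) : ℕ) = 0 := by
    intro i
    by_cases h : i = L
    · rw [if_pos h, if_neg (by rw [h]; exact hLP)]
    · rw [if_neg h, if_neg h]
  have hcol : ∀ i : Fin C,
      (∑ j : Fin C, ((if j = L then (if i = P then n j else 0)
          else (if i = L then n j else 0) : ℕ) : ℝ))
      = (if i = P then (n L : ℝ) else 0) + (if i = L then T - (n L : ℝ) else 0) := by
    intro i
    rw [← Finset.add_sum_erase univ _ (mem_univ L), if_pos rfl]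
    congr 1
    · push_cast; rfl
    · rcases eq_or_ne i L with hiL | hiL
      · rw [if_pos hiL]
        rw [Finset.sum_congr rfl (fun j hj => by
            rw [if_neg (Finset.ne_of_mem_erase hj), if_pos hiL] : ∀ j ∈ univ.erase L,
              ((if j = L then (if i = P then n j else 0)
                else (if i = L then n j else 0) : ℕ) : ℝ) = (n j : ℝ))]
        rw [Finset.sum_erase_eq_sub (mem_univ L)]
      · rw [if_neg hiL]
        apply Finset.sum_eq_zero
        intro j hj
        rw [if_neg (Finset.ne_of_mem_erase hj), if_neg hiL]
        norm_num
  have hterm : ∀ i ∈ (univ : Finset (Fin C)),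
      (1 + (((if i = L then (if i = P then n i else 0)
            else (if i = L then n i else 0)) : ℕ) : ℝ) / (n i : ℝ)
        - ((∑ j : Fin C, ((if j = L then (if i = P then n j else 0)
            else (if i = L then n j else 0) : ℕ) : ℝ))
          - (((if i = L then (if i = P then n i else 0)
            else (if i = L then n i else 0)) : ℕ) : ℝ))
            / (T - (n i : ℝ)))
      = 1 - ((if i = P then (n L : ℝ) / (T - (n P : ℝ)) else 0)
          + (if i = L then 1 else 0)) := by
    intro i _
    rw [hdiag i, hcol i]
    push_cast
    rcases eq_or_ne i P with hiP | hiP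
    · have hiL : i ≠ L := by rw [hiP]; exact fun h => hLP h.symm
      rw [if_pos hiP, if_pos hiP, if_neg hiL, if_neg hiL, hiP]
      ring
    · rcases eq_or_ne i L with hiL | hiL
      · rw [if_neg hiP, if_neg hiP, if_pos hiL, if_pos hiL, hiL]
        have h0 : (0 + (T - (n L : ℝ)) - 0) = T - (n L : ℝ) := by ring
        rw [h0, div_self (ne_of_gt hTL)]
        ring
      · rw [if_neg hiP, if_neg hiP, if_neg hiL, if_neg hiL]
        ring
  rw [Finset.sum_congr rfl hterm, Finset.sum_sub_distrib, Finset.sum_const, Finset.card_univ,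
    Fintype.card_fin, Finset.sum_add_distrib]
  simp only [Finset.sum_ite_eq', Finset.mem_univ, if_pos]
  ring

lemma rhoOVA_aux_diag {C : ℕ} (hC : 2 ≤ C) (n : Fin C → ℕ) (hn : ∀ i, 0 < n i) :
    rhoOVA C (fun i j => if i = j then n i else 0) = 1 := by
  have hC0 : (0:ℝ) < (C:ℝ) := by exact_mod_cast (by omega : 0 < C)
  have hrow : ∀ i : Fin C, ∑ j : Fin C, (if i = j then n i else 0) = n i := by
    intro i
    simp [Finset.sum_ite_eq]
  rw [rhoOVA_aux_eq n _ hrow]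
  have hterm : ∀ i ∈ (univ : Finset (Fin C)),
      (1 + ((if i = i then n i else 0 : ℕ) : ℝ) / (n i : ℝ)
        - ((∑ j : Fin C, ((if j = i then n j else 0 : ℕ) : ℝ))
            - ((if i = i then n i else 0 : ℕ) : ℝ))
            / ((∑ j, (n j : ℝ)) - (n i : ℝ))) = 2 := by
    intro i _
    have hni : (n i : ℝ) ≠ 0 := by
      have := hn i; positivity
    have hcol : (∑ j : Fin C, ((if j = i then n j else 0 : ℕ) : ℝ)) = (n i : ℝ) := by
      rw [Finset.sum_congr rfl (fun j _ => by push_cast; rfl : ∀ j ∈ (univ : Finset (Fin C)),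
        ((if j = i then n j else 0 : ℕ) : ℝ) = if j = i then (n j : ℝ) else 0)]
      simp
    rw [hcol, if_pos rfl, div_self hni, sub_self, zero_div]
    ring
  rw [Finset.sum_congr rfl hterm, Finset.sum_const, Finset.card_univ, Fintype.card_fin]
  push_cast
  field_simp
  ring

/-- Fix `C ≥ 2` and positive row sums `n 0 ≤ n 1 ≤ ... ≤ n (C-1)`.
Over all `C`-class confusion matrices with these row sums, `ρ_a` attains its minimum
`(1/(2C))·(C−1 − n_C/(n−n_{C−1}))` at the matrix where every class `i < C-1` is entirely
predicted as the last class and the last class is entirely predicted as class `C-2`;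
and `ρ_a` attains its maximum `1` at the diagonal matrix. -/
theorem rhoOVA_min_max (C : ℕ) (hC : 2 ≤ C) (n : Fin C → ℕ)
    (hn : ∀ i, 0 < n i) (hmono : Monotone n) :
    (∀ m : Fin C → Fin C → ℕ, (∀ i, ∑ j, m i j = n i) →
        (1 / (2 * (C : ℝ))) * ((C : ℝ) - 1 -
            (n ⟨C - 1, by omega⟩ : ℝ) / ((∑ i, (n i : ℝ)) - (n ⟨C - 2, by omega⟩ : ℝ)))
          ≤ rhoOVA C m) ∧
    rhoOVA C (fun i j =>
        if i = (⟨C - 1, by omega⟩ : Fin C) then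
          (if j = (⟨C - 2, by omega⟩ : Fin C) then n i else 0)
        else (if j = (⟨C - 1, by omega⟩ : Fin C) then n i else 0))
      = (1 / (2 * (C : ℝ))) * ((C : ℝ) - 1 -
          (n ⟨C - 1, by omega⟩ : ℝ) / ((∑ i, (n i : ℝ)) - (n ⟨C - 2, by omega⟩ : ℝ))) ∧
    (∀ m : Fin C → Fin C → ℕ, (∀ i, ∑ j, m i j = n i) → rhoOVA C m ≤ 1) ∧
    rhoOVA C (fun i j => if i = j then n i else 0) = 1 := by
  refine ⟨fun m hrow => rhoOVA_aux_lower hC n hn hmono ⟨C - 1, by omega⟩ ⟨C - 2, by omega⟩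
      rfl rfl m hrow,
    rhoOVA_aux_minmat hC n hn ⟨C - 1, by omega⟩ ⟨C - 2, by omega⟩ rfl rfl,
    fun m hrow => rhoOVA_aux_le_one hC n hn m hrow,
    rhoOVA_aux_diag hC n hn⟩
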